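/- arXiv:2004.14286 — 2 statements merged into one kernel-verified Lean document; each statement's English description precedes it below -/
import Mathlib

section
/- Let f : P → Q be a map of posets, T a superlinear family of translations on Q, and C a cocomplete category. Then the pushforward functor f_* is an isometry onto its image for the weak interleaving distances: for all P-modules M, N : P → C, d_P(M,N) = d_Q(f_*M, f_*N), where d_P is the weak relative interleaving distance on P-modules and d_Q is the weak interleaving distance on Q-modules (both valued in [0,∞]). -/
/-! Every relative construction over `P` is `f^*` of the corresponding construction over `Q`,
glued with the unit and counit of `f_* ⊣ f^*`. Transposing along this adjunction therefore
carries the relative pentagon equations for `(φ, ψ)` exactly to the pentagon equations over `Q`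
for the transposed pair. So the same `ε` admit interleavings on both sides, and the two infima
agree. -/

open CategoryTheory Limits NNReal ENNReal

universe v u

/-- A superlinear family of translations on a poset `Q`. -/
structure SuperlinearFamily (Q : Type v) [PartialOrder Q] where
  trans : ℝ≥0 → Q →o Q
  le_self : ∀ (ε : ℝ≥0) (q : Q), q ≤ trans ε q
  superlinear : ∀ (ε₁ ε₂ : ℝ≥0) (q : Q), trans ε₂ (trans ε₁ q) ≤ trans (ε₁ + ε₂) q

namespace SuperlinearFamily

variable {Q : Type v} [PartialOrder Q] (T : SuperlinearFamily Q)

lemma trans_mono_eps {ε ε' : ℝ≥0} (h : ε ≤ ε') (q : Q) : T.trans ε q ≤ T.trans ε' q :=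
  calc T.trans ε q ≤ T.trans (ε' - ε) (T.trans ε q) := T.le_self _ _
    _ ≤ T.trans (ε + (ε' - ε)) q := T.superlinear _ _ _
    _ = T.trans ε' q := by rw [add_tsub_cancel_of_le h]

variable {C : Type u} [Category.{v} C]

/-- The `ε`-shift `(M)^ε = M ∘ T_ε` of a `Q`-module. -/
def shift (ε : ℝ≥0) (M : Q ⥤ C) : Q ⥤ C := (T.trans ε).monotone.functor ⋙ M

/-- η^ε : M ⟶ (M)^ε. -/
def eta (ε : ℝ≥0) (M : Q ⥤ C) : M ⟶ T.shift ε M where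
  app q := M.map (homOfLE (T.le_self ε q))
  naturality a b u := by
    dsimp [shift, Monotone.functor]
    rw [← M.map_comp, ← M.map_comp]
    exact congrArg M.map (Subsingleton.elim _ _)

/-- η^{ε,ε'} : (M)^ε ⟶ (M)^{ε'} for ε ≤ ε'. -/
def etaLE {ε ε' : ℝ≥0} (h : ε ≤ ε') (M : Q ⥤ C) : T.shift ε M ⟶ T.shift ε' M where
  app q := M.map (homOfLE (T.trans_mono_eps h q))
  naturality a b u := by
    dsimp [shift, Monotone.functor]
    rw [← M.map_comp, ← M.map_comp]
    exact congrArg M.map (Subsingleton.elim _ _)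

/-- Σ^{ε,ε} : ((M)^ε)^ε ⟶ (M)^{2ε}. -/
def sigma (ε : ℝ≥0) (M : Q ⥤ C) : T.shift ε (T.shift ε M) ⟶ T.shift (2 * ε) M where
  app q := M.map (homOfLE (show T.trans ε (T.trans ε q) ≤ T.trans (2 * ε) q by
    rw [two_mul]; exact T.superlinear ε ε q))
  naturality a b u := by
    dsimp [shift, Monotone.functor]
    rw [← M.map_comp, ← M.map_comp]
    exact congrArg M.map (Subsingleton.elim _ _)

/-- The shift of a natural transformation: (ψ)^ε := T_ε^* ψ. -/
def shiftHom (ε : ℝ≥0) {M N : Q ⥤ C} (ψ : M ⟶ N) : T.shift ε M ⟶ T.shift ε N :=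
  Functor.whiskerLeft (T.trans ε).monotone.functor ψ

/-- A weak ε-interleaving of `Q`-modules `M` and `N`. -/
def WeakInterleaving (ε : ℝ≥0) (M N : Q ⥤ C) : Prop :=
  ∃ (φ : M ⟶ T.shift ε N) (ψ : N ⟶ T.shift ε M),
    φ ≫ T.shiftHom ε ψ ≫ T.sigma ε M = T.eta 0 M ≫ T.etaLE zero_le M ∧
    ψ ≫ T.shiftHom ε φ ≫ T.sigma ε N = T.eta 0 N ≫ T.etaLE zero_le N

/-- The weak interleaving distance between two `Q`-modules, valued in `[0,∞]`. -/
noncomputable def weakDist (M N : Q ⥤ C) : ℝ≥0∞ :=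
  ⨅ ε : {ε : ℝ≥0 // T.WeakInterleaving ε M N}, (ε : ℝ≥0∞)

end SuperlinearFamily

namespace SuperlinearFamily

variable {P : Type v} [PartialOrder P] {Q : Type v} [PartialOrder Q]
variable (T : SuperlinearFamily Q)
variable {C : Type u} [Category.{v} C] [HasColimits C]

/-- The ε-shift of a `P`-module relative to `f : P → Q`, i.e. `f^* T_ε^* f_* M`. -/
noncomputable def relShift (f : P →o Q) (ε : ℝ≥0) (M : P ⥤ C) : P ⥤ C :=
  f.monotone.functor ⋙ T.shift ε (f.monotone.functor.lan.obj M)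

/-- η_P^0 : M ⟶ (M)_P^0, built from the unit of `f_* ⊣ f^*` and η^0 over `Q`. -/
noncomputable def relEtaZero (f : P →o Q) (M : P ⥤ C) : M ⟶ T.relShift f 0 M :=
  f.monotone.functor.lanUnit.app M ≫
    Functor.whiskerLeft f.monotone.functor (T.eta 0 (f.monotone.functor.lan.obj M))

/-- η_P^{0,2ε} : (M)_P^0 ⟶ (M)_P^{2ε}. -/
noncomputable def relEtaLE (f : P →o Q) (ε : ℝ≥0) (M : P ⥤ C) :
    T.relShift f 0 M ⟶ T.relShift f (2 * ε) M :=
  Functor.whiskerLeft f.monotone.functor (T.etaLE zero_le (f.monotone.functor.lan.obj M))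

/-- Σ_P^{ε,ε} : ((M)_P^ε)_P^ε ⟶ (M)_P^{2ε}, the composite of `f^* T_ε^* χ T_ε^* f_*`
with `f^* Σ^{ε,ε} f_*`. -/
noncomputable def relSigma (f : P →o Q) (ε : ℝ≥0) (M : P ⥤ C) :
    T.relShift f ε (T.relShift f ε M) ⟶ T.relShift f (2 * ε) M :=
  Functor.whiskerLeft f.monotone.functor
      (Functor.whiskerLeft (T.trans ε).monotone.functor
        ((f.monotone.functor.lanAdjunction C).counit.app
          (T.shift ε (f.monotone.functor.lan.obj M)))) ≫
    Functor.whiskerLeft f.monotone.functor (T.sigma ε (f.monotone.functor.lan.obj M))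

/-- The relative shift of a natural transformation, `(ψ)_P^ε := f^* T_ε^* f_* ψ`. -/
noncomputable def relShiftHom (f : P →o Q) (ε : ℝ≥0) {N M : P ⥤ C} (ψ : N ⟶ M) :
    T.relShift f ε N ⟶ T.relShift f ε M :=
  Functor.whiskerLeft f.monotone.functor
    (Functor.whiskerLeft (T.trans ε).monotone.functor (f.monotone.functor.lan.map ψ))

/-- A weak ε-interleaving of `P`-modules `M` and `N` relative to `f : P → Q`. -/
def RelWeakInterleaving (f : P →o Q) (ε : ℝ≥0) (M N : P ⥤ C) : Prop :=
  ∃ (φ : M ⟶ T.relShift f ε N) (ψ : N ⟶ T.relShift f ε M),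
    φ ≫ T.relShiftHom f ε ψ ≫ T.relSigma f ε M = T.relEtaZero f M ≫ T.relEtaLE f ε M ∧
    ψ ≫ T.relShiftHom f ε φ ≫ T.relSigma f ε N = T.relEtaZero f N ≫ T.relEtaLE f ε N

/-- The weak relative interleaving distance between two `P`-modules, valued in `[0,∞]`. -/
noncomputable def relWeakDist (f : P →o Q) (M N : P ⥤ C) : ℝ≥0∞ :=
  ⨅ ε : {ε : ℝ≥0 // T.RelWeakInterleaving f ε M N}, (ε : ℝ≥0∞)

end SuperlinearFamily

namespace SuperlinearFamily

variable {P : Type v} [PartialOrder P] {Q : Type v} [PartialOrder Q]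
variable (T : SuperlinearFamily Q)
variable {C : Type u} [Category.{v} C] [HasColimits C]
variable (f : P →o Q)

/-- The transposition of `f_* ⊣ f^*`, with its target written as a relative shift so that it
composes with the relative constructions without unfolding them. -/
noncomputable def homEquivRelShift (ε : ℝ≥0) (M N : P ⥤ C) :
    (f.monotone.functor.lan.obj M ⟶ T.shift ε (f.monotone.functor.lan.obj N)) ≃
      (M ⟶ T.relShift f ε N) :=
  (f.monotone.functor.lanAdjunction C).homEquiv M _

lemma homEquivRelShift_apply (ε : ℝ≥0) {M N : P ⥤ C}
    (φ : f.monotone.functor.lan.obj M ⟶ T.shift ε (f.monotone.functor.lan.obj N)) :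
    T.homEquivRelShift f ε M N φ =
      f.monotone.functor.lanUnit.app M ≫ Functor.whiskerLeft f.monotone.functor φ :=
  ((f.monotone.functor.lanAdjunction C).homEquiv_unit M _ φ).trans
    (by rw [Functor.lanAdjunction_unit]; rfl)

lemma homEquivRelShift_symm_apply (ε : ℝ≥0) {M N : P ⥤ C} (φ : M ⟶ T.relShift f ε N) :
    (T.homEquivRelShift f ε M N).symm φ =
      f.monotone.functor.lan.map φ ≫ (f.monotone.functor.lanAdjunction C).counit.app _ :=
  (f.monotone.functor.lanAdjunction C).homEquiv_counit M _ φ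

lemma relShiftHom_comp_relSigma (ε : ℝ≥0) {M N : P ⥤ C} (ψ : N ⟶ T.relShift f ε M) :
    T.relShiftHom f ε ψ ≫ T.relSigma f ε M = Functor.whiskerLeft f.monotone.functor
      (T.shiftHom ε ((T.homEquivRelShift f ε N M).symm ψ) ≫ T.sigma ε _) := by
  ext p
  rw [homEquivRelShift_symm_apply]
  exact (Category.assoc _ _ _).symm

lemma homEquivRelShift_symm_comp_relShiftHom_comp_relSigma (ε : ℝ≥0) {M N : P ⥤ C}
    (φ : M ⟶ T.relShift f ε N) (ψ : N ⟶ T.relShift f ε M) :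
    (T.homEquivRelShift f (2 * ε) M M).symm (φ ≫ T.relShiftHom f ε ψ ≫ T.relSigma f ε M) =
      (T.homEquivRelShift f ε M N).symm φ ≫
        T.shiftHom ε ((T.homEquivRelShift f ε N M).symm ψ) ≫ T.sigma ε _ := by
  rw [relShiftHom_comp_relSigma]
  exact (f.monotone.functor.lanAdjunction C).homEquiv_naturality_right_symm _ _

lemma homEquivRelShift_eta_comp_etaLE (ε : ℝ≥0) (M : P ⥤ C) :
    T.homEquivRelShift f (2 * ε) M M (T.eta 0 _ ≫ T.etaLE zero_le _) =
      T.relEtaZero f M ≫ T.relEtaLE f ε M := by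
  rw [homEquivRelShift_apply]
  ext p
  dsimp only [relEtaZero, relEtaLE, relShift, NatTrans.comp_app, Functor.whiskerLeft_app]
  rw [Category.assoc]

lemma relWeakInterleaving_iff (ε : ℝ≥0) (M N : P ⥤ C) :
    T.RelWeakInterleaving f ε M N ↔
      T.WeakInterleaving ε (f.monotone.functor.lan.obj M) (f.monotone.functor.lan.obj N) := by
  refine (T.homEquivRelShift f ε M N).symm.exists_congr fun {φ} =>
    (T.homEquivRelShift f ε N M).symm.exists_congr fun {ψ} => ?_
  simp only [← homEquivRelShift_symm_comp_relShiftHom_comp_relSigma,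
    ← homEquivRelShift_eta_comp_etaLE, Equiv.symm_apply_eq]

end SuperlinearFamily

/-- The pushforward functor `f_*` is an isometry onto its image: for all `P`-modules
`M`, `N`, the weak relative interleaving distance over `P` equals the weak interleaving
distance over `Q` between the pushforwards. -/
theorem pushforward_isometry {P Q : Type v} [PartialOrder P] [PartialOrder Q]
    {C : Type u} [Category.{v} C] [HasColimits C]
    (T : SuperlinearFamily Q) (f : P →o Q) (M N : P ⥤ C) :
    T.relWeakDist f M N =
      T.weakDist (f.monotone.functor.lan.obj M) (f.monotone.functor.lan.obj N) := by
  simp only [SuperlinearFamily.relWeakDist, SuperlinearFamily.weakDist, iInf_subtype,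
    T.relWeakInterleaving_iff]
end

section
/- Let L be a complete lattice, Q a partially ordered set equipped with a superlinear family of translations T, and δ ≥ 0. If f : L → Q is a δ-approximation that respects joins and C is a cocomplete category, then for every Q-module M : Q → C the weak interleaving distance between M and its lower pixelization satisfies d_Q(M, f_*f^*M) ≤ δ (equivalently, d_Q(M, M ∘ f ∘ f♭) ≤ δ). Dually, if f : L → Q is a δ-approximation that respects meets and C is complete, then d_Q(M, f_†f^*M) ≤ δ (equivalently, d_Q(M, M ∘ f ∘ f♯) ≤ δ) for every Q-module M. -/
/-!
If `f` respects joins, `f ⊣ f♭` is a Galois connection, so the left Kan extension along `f` is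
restriction along `f♭` and the lower pixelization is `M ∘ r` with `r = f ∘ f♭`. Then
`r q ≤ q ≤ T_δ q`, and the δ-approximation property gives `q ≤ r (T_δ q)`; the maps of `M` along
these two inequalities form a weak δ-interleaving of `M` and `M ∘ r`, whose identities hold
because `Q` is thin. Dually for `f♯ ⊣ f`, right Kan extensions and `r = f ∘ f♯`.
-/

open CategoryTheory Limits NNReal ENNReal

universe v u

/-- The map `f♭ : Q → L`, `f♭(q) = sSup {x | f x ≤ q}`, as a monotone map. -/
def flatHom {L : Type v} [CompleteLattice L] {Q : Type v} [PartialOrder Q] (f : L →o Q) :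
    Q →o L :=
  ⟨fun q => sSup {x : L | f x ≤ q}, fun _ _ h => sSup_le_sSup fun _ hx => le_trans hx h⟩

/-- The map `f♯ : Q → L`, `f♯(q) = sInf {x | q ≤ f x}`, as a monotone map. -/
def sharpHom {L : Type v} [CompleteLattice L] {Q : Type v} [PartialOrder Q] (f : L →o Q) :
    Q →o L :=
  ⟨fun q => sInf {x : L | q ≤ f x}, fun _ _ h => sInf_le_sInf fun _ hx => le_trans h hx⟩

namespace SuperlinearFamily

variable {Q : Type v} [PartialOrder Q] (T : SuperlinearFamily Q) {C : Type u} [Category.{v} C]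

lemma weakDist_le_of_weakInterleaving {ε : ℝ≥0} {M N : Q ⥤ C} (h : T.WeakInterleaving ε M N) :
    T.weakDist M N ≤ ε :=
  iInf_le (fun ε : {ε : ℝ≥0 // T.WeakInterleaving ε M N} => (ε : ℝ≥0∞)) ⟨ε, h⟩

section Naturality

variable {M N P : Q ⥤ C} (α : M ⟶ N)

lemma shiftHom_comp (ε : ℝ≥0) (β : N ⟶ P) :
    T.shiftHom ε (α ≫ β) = T.shiftHom ε α ≫ T.shiftHom ε β :=
  Functor.whiskerLeft_comp _ _ _

lemma shiftHom_id (ε : ℝ≥0) : T.shiftHom ε (𝟙 M) = 𝟙 _ :=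
  Functor.whiskerLeft_id' _

lemma eta_naturality (ε : ℝ≥0) : α ≫ T.eta ε N = T.eta ε M ≫ T.shiftHom ε α := by
  ext q
  exact (α.naturality _).symm

lemma etaLE_naturality {ε ε' : ℝ≥0} (h : ε ≤ ε') :
    T.shiftHom ε α ≫ T.etaLE h N = T.etaLE h M ≫ T.shiftHom ε' α := by
  ext q
  exact (α.naturality _).symm

lemma sigma_naturality (ε : ℝ≥0) :
    T.shiftHom ε (T.shiftHom ε α) ≫ T.sigma ε N = T.sigma ε M ≫ T.shiftHom (2 * ε) α := by
  ext q
  exact (α.naturality _).symm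

end Naturality

variable {T} in
lemma WeakInterleaving.of_iso_right {ε : ℝ≥0} {M N N' : Q ⥤ C} (h : T.WeakInterleaving ε M N)
    (e : N ≅ N') : T.WeakInterleaving ε M N' := by
  obtain ⟨φ, ψ, hφψ, hψφ⟩ := h
  refine ⟨φ ≫ T.shiftHom ε e.hom, e.inv ≫ ψ, ?_, ?_⟩
  · simp only [shiftHom_comp, Category.assoc]
    rw [← Category.assoc (T.shiftHom ε e.hom), ← shiftHom_comp, e.hom_inv_id, shiftHom_id,
      Category.id_comp, hφψ]
  · simp only [shiftHom_comp, Category.assoc]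
    rw [sigma_naturality, reassoc_of% hψφ, ← etaLE_naturality, ← Category.assoc (T.eta 0 N),
      ← eta_naturality, Category.assoc, e.inv_hom_id_assoc]

lemma weakInterleaving_precomp {δ : ℝ≥0} (r : Q →o Q) (h_le : ∀ q, q ≤ r (T.trans δ q))
    (h_ge : ∀ q, r q ≤ T.trans δ q) (M : Q ⥤ C) :
    T.WeakInterleaving δ M (r.monotone.functor ⋙ M) := by
  refine ⟨⟨fun q => M.map (homOfLE (h_le q)), fun _ _ _ => ?_⟩,
    ⟨fun q => M.map (homOfLE (h_ge q)), fun _ _ _ => ?_⟩, ?_, ?_⟩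
  -- every component is `M` applied to an arrow of the poset `Q`, where parallel arrows agree
  all_goals
    try ext
    dsimp [shiftHom, sigma, eta, etaLE, shift, Monotone.functor]
    simp only [← M.map_comp]
    congr 1

end SuperlinearFamily

namespace CategoryTheory.Adjunction

variable {A B : Type*} [Category* A] [Category* B] {F : A ⥤ B} {G : B ⥤ A}
  (H : Type*) [Category* H]

noncomputable def lanIsoWhiskeringLeft (adj : F ⊣ G) [∀ X : A ⥤ H, F.HasLeftKanExtension X] :
    F.lan ≅ (Functor.whiskeringLeft B A H).obj G :=
  (F.lanAdjunction H).leftAdjointUniq (adj.whiskerLeft H)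

noncomputable def ranIsoWhiskeringLeft (adj : G ⊣ F) [∀ X : A ⥤ H, F.HasRightKanExtension X] :
    F.ran ≅ (Functor.whiskeringLeft B A H).obj G :=
  (F.ranAdjunction H).rightAdjointUniq (adj.whiskerLeft H)

end CategoryTheory.Adjunction

section Pixelization

variable {L : Type v} [CompleteLattice L] {Q : Type v} [PartialOrder Q] (f : L →o Q)

lemma galoisConnection_flatHom
    (hJ : ∀ (S : Set L) (q : Q), (∀ x ∈ S, f x ≤ q) → f (sSup S) ≤ q) :
    GaloisConnection f (flatHom f) := fun _ q =>
  ⟨fun h => le_sSup h, fun h => (f.monotone h).trans (hJ _ q fun _ hx => hx)⟩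

lemma galoisConnection_sharpHom
    (hM : ∀ (S : Set L) (q : Q), (∀ x ∈ S, q ≤ f x) → q ≤ f (sInf S)) :
    GaloisConnection (sharpHom f) f := fun q _ =>
  ⟨fun h => (hM _ q fun _ hx => hx).trans (f.monotone h), fun h => sInf_le h⟩

variable {f} (T : SuperlinearFamily Q) {δ : ℝ≥0}

lemma le_flatHom_trans_of_approx (happrox : ∀ q : Q, ∃ p : L, q ≤ f p ∧ f p ≤ T.trans δ q)
    (q : Q) : q ≤ f (flatHom f (T.trans δ q)) :=
  let ⟨_, hqp, hpq⟩ := happrox q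
  hqp.trans (f.monotone (le_sSup hpq))

lemma sharpHom_le_trans_of_approx (happrox : ∀ q : Q, ∃ p : L, q ≤ f p ∧ f p ≤ T.trans δ q)
    (q : Q) : f (sharpHom f q) ≤ T.trans δ q :=
  let ⟨_, hqp, hpq⟩ := happrox q
  (f.monotone (sInf_le hqp)).trans hpq

end Pixelization

/-- If `f : L → Q` is a δ-approximation from a complete lattice which respects joins, then
every `Q`-module is within weak interleaving distance δ of its lower pixelization
`f_*f^*M ≅ M ∘ f ∘ f♭`; dually, if `f` respects meets, every `Q`-module is within
distance δ of its upper pixelization `f_†f^*M ≅ M ∘ f ∘ f♯`. -/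
theorem dist_to_pixelization_le_delta {L : Type v} [CompleteLattice L]
    {Q : Type v} [PartialOrder Q] (T : SuperlinearFamily Q) (δ : ℝ≥0) (f : L →o Q)
    (happrox : ∀ q : Q, ∃ p : L, q ≤ f p ∧ f p ≤ T.trans δ q) :
    ((∀ (S : Set L) (q : Q), (∀ x ∈ S, f x ≤ q) → f (sSup S) ≤ q) →
      ∀ (C : Type u) [Category.{v} C] [HasColimits C] (M : Q ⥤ C),
        T.weakDist M (f.monotone.functor.lan.obj (f.monotone.functor ⋙ M)) ≤ (δ : ℝ≥0∞) ∧
        T.weakDist M ((f.comp (flatHom f)).monotone.functor ⋙ M) ≤ (δ : ℝ≥0∞)) ∧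
    ((∀ (S : Set L) (q : Q), (∀ x ∈ S, q ≤ f x) → q ≤ f (sInf S)) →
      ∀ (C : Type u) [Category.{v} C] [HasLimits C] (M : Q ⥤ C),
        T.weakDist M (f.monotone.functor.ran.obj (f.monotone.functor ⋙ M)) ≤ (δ : ℝ≥0∞) ∧
        T.weakDist M ((f.comp (sharpHom f)).monotone.functor ⋙ M) ≤ (δ : ℝ≥0∞)) := by
  refine ⟨fun hJ C _ _ M => ?_, fun hM C _ _ M => ?_⟩
  · have gc := galoisConnection_flatHom f hJ
    have h := T.weakInterleaving_precomp (f.comp (flatHom f))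
      (le_flatHom_trans_of_approx T happrox) (fun q => (gc.l_u_le q).trans (T.le_self δ q)) M
    have e := (gc.adjunction.lanIsoWhiskeringLeft C).app (f.monotone.functor ⋙ M)
    exact ⟨T.weakDist_le_of_weakInterleaving (h.of_iso_right e.symm),
      T.weakDist_le_of_weakInterleaving h⟩
  · have gc := galoisConnection_sharpHom f hM
    have h := T.weakInterleaving_precomp (f.comp (sharpHom f))
      (fun q => (T.le_self δ q).trans (gc.le_u_l _)) (sharpHom_le_trans_of_approx T happrox) M
    have e := (gc.adjunction.ranIsoWhiskeringLeft C).app (f.monotone.functor ⋙ M)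
    exact ⟨T.weakDist_le_of_weakInterleaving (h.of_iso_right e.symm),
      T.weakDist_le_of_weakInterleaving h⟩
end
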